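/- (Corollary 1, part 1) Suppose C = (f, g) is a CLIP-like model that respects basic descriptions, negation, and disjunction, and I is describable by A. Fix any image j ∈ I (so that f(j) determines the common ray R of Lemma 1). Then for every atom a ∈ A, if there exists i ∈ I with i ⊨ ¬a, then α(f(j), g(a)) = −1; equivalently, g(a) is a positive scalar multiple of −f(j), i.e., g(a) lies on the anti-ray of R. -/

import Mathlib

open scoped RealInnerProductSpace

/-- Cosine similarity between two vectors in a real inner product space. -/
noncomputable def cosSim {L : Type*} [NormedAddCommGroup L] [InnerProductSpace ℝ L]
    (x y : L) : ℝ := ⟪x, y⟫ / (‖x‖ * ‖y‖)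

/-- Propositional formulas over a set `A` of atomic descriptions. -/
inductive Formula (A : Type*) : Type _
  | atom : A → Formula A
  | neg  : Formula A → Formula A
  | or   : Formula A → Formula A → Formula A
  | and  : Formula A → Formula A → Formula A

variable {I A L : Type*} [NormedAddCommGroup L] [InnerProductSpace ℝ L]

/-- Satisfaction `i ⊨ d`, defined by recursion on the formula `d`. -/
def Sat (f : I → L) (g : Formula A → L) (i : I) : Formula A → Prop
  | .atom a => cosSim (f i) (g (.atom a)) > cosSim (f i) (g (.neg (.atom a)))
  | .neg d  => ¬ Sat f g i d
  | .or d e => Sat f g i d ∨ Sat f g i e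
  | .and d e => Sat f g i d ∧ Sat f g i e

/-- `I` is describable by `A`. -/
def Describable (f : I → L) (g : Formula A → L) : Prop :=
  (∀ i : I, ∃ a : A, Sat f g i (.atom a)) ∧ (∀ a : A, ∃ i : I, Sat f g i (.atom a))

/-- `(I, A)` is separable. -/
def Separable (f : I → L) (g : Formula A → L) : Prop :=
  (∀ i : I, ∃ a : A, Sat f g i (.neg (.atom a))) ∧
  (∀ a : A, ∃ i : I, Sat f g i (.neg (.atom a)))

/-- `C` respects basic descriptions. -/
def RespectsBasic (f : I → L) (g : Formula A → L) : Prop :=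
  ∀ (i : I) (a : A), Sat f g i (.atom a) → cosSim (f i) (g (.atom a)) = 1

/-- `C` respects negation. -/
def RespectsNeg (f : I → L) (g : Formula A → L) : Prop :=
  ∀ (i : I) (a : A), Sat f g i (.neg (.atom a)) → cosSim (f i) (g (.atom a)) = -1

/-- `C` respects disjunction. -/
def RespectsDisj (f : I → L) (g : Formula A → L) : Prop :=
  ∀ (i : I) (d e : Formula A), Sat f g i (.or d e) → cosSim (f i) (g (.or d e)) = 1

/-- `C` respects conjunction. -/
def RespectsConj (f : I → L) (g : Formula A → L) : Prop :=
  ∀ (i : I) (d e : Formula A), Sat f g i (.and d e) → cosSim (f i) (g (.and d e)) = 1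

/-!
If images `i` and `j` satisfy atoms `c` and `b`, both satisfy `c ∨ b`, so respect of
disjunction puts `g (c ∨ b)` on the ray of `f i` and on the ray of `f j`: all images span
one common ray. An image falsifying `a` has cosine similarity `-1` with `g a`, and cosine
similarity is invariant under positive rescaling, so the same holds for `f j`.
-/

open InnerProductGeometry

theorem cosSim_eq_one_iff (x y : L) :
    cosSim x y = 1 ↔ x ≠ 0 ∧ ∃ r : ℝ, 0 < r ∧ y = r • x :=
  real_inner_div_norm_mul_norm_eq_one_iff x y

theorem cosSim_eq_neg_one_iff (x y : L) :
    cosSim x y = -1 ↔ x ≠ 0 ∧ ∃ r : ℝ, r < 0 ∧ y = r • x :=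
  real_inner_div_norm_mul_norm_eq_neg_one_iff x y

theorem cosSim_smul_left_of_pos (x y : L) {r : ℝ} (hr : 0 < r) :
    cosSim (r • x) y = cosSim x y := by
  simp only [cosSim, ← cos_angle, angle_smul_left_of_pos x y hr]

theorem RespectsDisj.exists_pos_smul {f : I → L} {g : Formula A → L} (hdisj : RespectsDisj f g)
    (hsat : ∀ i : I, ∃ a : A, Sat f g i (.atom a)) (i j : I) :
    ∃ r : ℝ, 0 < r ∧ f i = r • f j := by
  obtain ⟨c, hc⟩ := hsat i
  obtain ⟨b, hb⟩ := hsat j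
  obtain ⟨-, s, hs, hgi⟩ :=
    (cosSim_eq_one_iff _ _).1 (hdisj i (.atom c) (.atom b) (Or.inl hc))
  obtain ⟨-, t, ht, hgj⟩ :=
    (cosSim_eq_one_iff _ _).1 (hdisj j (.atom c) (.atom b) (Or.inr hb))
  refine ⟨t / s, div_pos ht hs, ?_⟩
  rw [div_eq_inv_mul, mul_smul, ← hgj, hgi, smul_smul, inv_mul_cancel₀ hs.ne', one_smul]

theorem corollary1_part1_general
    (f : I → L) (g : Formula A → L)
    (hneg : RespectsNeg f g) (hdisj : RespectsDisj f g)
    (hdesc : Describable f g) (j : I) :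
    ∀ a : A, (∃ i : I, Sat f g i (.neg (.atom a))) →
      cosSim (f j) (g (.atom a)) = -1 ∧
      ∃ t : ℝ, 0 < t ∧ g (.atom a) = t • (-(f j)) := by
  rintro a ⟨i, hi⟩
  obtain ⟨r, hr, hfi⟩ := hdisj.exists_pos_smul hdesc.1 i j
  have hj : cosSim (f j) (g (.atom a)) = -1 := by
    rw [← cosSim_smul_left_of_pos _ _ hr, ← hfi]
    exact hneg i a hi
  obtain ⟨-, s, hs, hga⟩ := (cosSim_eq_neg_one_iff _ _).1 hj
  exact ⟨hj, -s, neg_pos.2 hs, by rw [hga, smul_neg, neg_smul, neg_neg]⟩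

/-- **Corollary 1, part 1.** Fixing any image `j` (so `f j` determines the common ray of
Lemma 1): for every atom `a`, if some image falsifies `a`, then `α(f j, g a) = -1`;
equivalently `g a` lies on the anti-ray of the ray of `f j`. -/
theorem corollary1_part1
    (f : I → L) (g : Formula A → L)
    (hf : ∀ i : I, f i ≠ 0) (hg : ∀ d : Formula A, g d ≠ 0)
    (hbasic : RespectsBasic f g) (hneg : RespectsNeg f g) (hdisj : RespectsDisj f g)
    (hdesc : Describable f g) (j : I) :
    ∀ a : A, (∃ i : I, Sat f g i (.neg (.atom a))) →
      cosSim (f j) (g (.atom a)) = -1 ∧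
      ∃ t : ℝ, 0 < t ∧ g (.atom a) = t • (-(f j)) :=
  corollary1_part1_general f g hneg hdisj hdesc j
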